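/- arXiv:2109.00981 — 3 statements merged into one kernel-verified Lean document; each statement's English description precedes it below -/
import Mathlib

section
/- Let ∂: G₁ → G₀ be a crossed module of groups. If (x, ξ) and (y, η) belong to Z₀(G), then the pair (x·y, t ↦ ˣη(t)·ξ(t)) also belongs to Z₀(G), and the binary operation (x,ξ)·(y,η) := (x·y, t ↦ ˣη(t)·ξ(t)) makes Z₀(G) into a group whose unit element is (1, 𝟏), where 𝟏 is the constant function with value 1. -/
/-- A crossed module of groups: a homomorphism `d : G₁ → G₀` together with an
action of `G₀` on `G₁` by group automorphisms satisfying the two Peiffer identities. -/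
structure XMod (G₁ G₀ : Type) [Group G₁] [Group G₀] where
  d : G₁ →* G₀
  act : G₀ →* MulAut G₁
  d_act : ∀ (x : G₀) (a : G₁), d (act x a) = x * d a * x⁻¹
  peiffer : ∀ (a b : G₁), act (d b) a = b * a * b⁻¹

variable {G₁ G₀ : Type} [Group G₁] [Group G₀]

/-- The defining conditions for membership in `Z₀(G)`:
`∂(ξ(t)) = [x,t]`, `ξ(∂a) = ˣa·a⁻¹` and `ξ(st) = ξ(s)·ˢξ(t)`. -/
def ZMem (C : XMod G₁ G₀) (x : G₀) (ξ : G₀ → G₁) : Prop :=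
  (∀ t : G₀, C.d (ξ t) = x * t * x⁻¹ * t⁻¹) ∧
  (∀ a : G₁, ξ (C.d a) = C.act x a * a⁻¹) ∧
  (∀ s t : G₀, ξ (s * t) = ξ s * C.act s (ξ t))

/-- `Z₀(G)` as a type: pairs `(x, ξ)` satisfying the three conditions. -/
def Z0 (C : XMod G₁ G₀) : Type :=
  {p : G₀ × (G₀ → G₁) // ZMem C p.1 p.2}

lemma XMod.act_mul (C : XMod G₁ G₀) (x y : G₀) (a : G₁) :
    C.act (x * y) a = C.act x (C.act y a) := by
  rw [map_mul, MulAut.mul_apply]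

lemma Z0key (C : XMod G₁ G₀) {x : G₀} {ξ : G₀ → G₁}
    (h1 : ∀ t, C.d (ξ t) = x * t * x⁻¹ * t⁻¹) (s : G₀) (u : G₁) :
    ξ s * C.act (s * x) u = C.act (x * s) u * ξ s := by
  have h := C.peiffer (C.act (s * x) u) (ξ s)
  rw [h1 s, ← C.act_mul] at h
  have e : x * s * x⁻¹ * s⁻¹ * (s * x) = x * s := by group
  rw [e] at h
  rw [h]; group

lemma Z0mul_mem (C : XMod G₁ G₀) (x y : G₀) (ξ η : G₀ → G₁)
    (hξ : ZMem C x ξ) (hη : ZMem C y η) :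
    ZMem C (x * y) (fun t => C.act x (η t) * ξ t) := by
  obtain ⟨hξ1, hξ2, hξ3⟩ := hξ
  obtain ⟨hη1, hη2, hη3⟩ := hη
  refine ⟨fun t => ?_, fun a => ?_, fun s t => ?_⟩
  · show C.d (C.act x (η t) * ξ t) = _
    rw [map_mul, C.d_act, hη1 t, hξ1 t]; group
  · show C.act x (η (C.d a)) * ξ (C.d a) = _
    rw [hη2 a, hξ2 a]
    simp only [MulEquiv.map_mul, MulEquiv.map_inv, ← C.act_mul]
    group
  · show C.act x (η (s * t)) * ξ (s * t) =
      (C.act x (η s) * ξ s) * C.act s (C.act x (η t) * ξ t)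
    rw [hη3 s t, hξ3 s t]
    simp only [MulEquiv.map_mul, ← C.act_mul]
    have h := Z0key C hξ1 s (η t)
    calc C.act x (η s) * C.act (x * s) (η t) * (ξ s * C.act s (ξ t))
        = C.act x (η s) * (C.act (x * s) (η t) * ξ s) * C.act s (ξ t) := by group
      _ = C.act x (η s) * (ξ s * C.act (s * x) (η t)) * C.act s (ξ t) := by rw [h]
      _ = C.act x (η s) * ξ s * (C.act (s * x) (η t) * C.act s (ξ t)) := by group

lemma Z0one_mem (C : XMod G₁ G₀) : ZMem C 1 (fun _ => (1 : G₁)) := by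
  refine ⟨fun t => ?_, fun a => ?_, fun s t => ?_⟩ <;> simp

lemma Z0inv_mem (C : XMod G₁ G₀) (x : G₀) (ξ : G₀ → G₁) (hξ : ZMem C x ξ) :
    ZMem C x⁻¹ (fun t => C.act x⁻¹ (ξ t)⁻¹) := by
  obtain ⟨hξ1, hξ2, hξ3⟩ := hξ
  have h1 : ∀ t, C.d (C.act x⁻¹ (ξ t)⁻¹) = x⁻¹ * t * (x⁻¹)⁻¹ * t⁻¹ := by
    intro t; rw [C.d_act, map_inv, hξ1 t]; group
  refine ⟨h1, fun a => ?_, fun s t => ?_⟩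
  · show C.act x⁻¹ (ξ (C.d a))⁻¹ = C.act x⁻¹ a * a⁻¹
    rw [hξ2 a]
    simp only [mul_inv_rev, inv_inv, MulEquiv.map_mul, MulEquiv.map_inv, ← C.act_mul,
      inv_mul_cancel, map_one, MulAut.one_apply]
  · show C.act x⁻¹ (ξ (s * t))⁻¹ =
      C.act x⁻¹ (ξ s)⁻¹ * C.act s (C.act x⁻¹ (ξ t)⁻¹)
    rw [hξ3 s t]
    simp only [mul_inv_rev, MulEquiv.map_mul, MulEquiv.map_inv, ← C.act_mul]
    have h := Z0key C h1 s ((ξ t)⁻¹)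
    simp only [MulEquiv.map_inv, ← C.act_mul] at h
    exact h.symm

/-- If `(x,ξ)` and `(y,η)` belong to `Z₀(G)` then so does `(x·y, t ↦ ˣη(t)·ξ(t))`,
and this operation makes `Z₀(G)` a group with unit `(1, 𝟏)`. -/
theorem Z0_mul_mem_and_group (C : XMod G₁ G₀) :
    (∀ (x y : G₀) (ξ η : G₀ → G₁), ZMem C x ξ → ZMem C y η →
      ZMem C (x * y) (fun t => C.act x (η t) * ξ t)) ∧
    ∃ _ : Group (Z0 C),
      (∀ p q : Z0 C, (p * q).val =
        (p.val.1 * q.val.1, fun t => C.act p.val.1 (q.val.2 t) * p.val.2 t)) ∧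
      (1 : Z0 C).val = (1, fun _ => 1) := by
  refine ⟨Z0mul_mem C, ?_⟩
  refine ⟨{ mul := fun p q => ⟨(p.1.1 * q.1.1, fun t => C.act p.1.1 (q.1.2 t) * p.1.2 t),
              Z0mul_mem C _ _ _ _ p.2 q.2⟩,
            one := ⟨(1, fun _ => 1), Z0one_mem C⟩,
            inv := fun p => ⟨(p.1.1⁻¹, fun t => C.act p.1.1⁻¹ (p.1.2 t)⁻¹),
              Z0inv_mem C _ _ p.2⟩,
            mul_assoc := ?_, one_mul := ?_, mul_one := ?_, inv_mul_cancel := ?_ },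
          fun p q => rfl, rfl⟩
  · rintro ⟨⟨a, α⟩, ha⟩ ⟨⟨b, β⟩, hb⟩ ⟨⟨c, γ⟩, hc⟩
    refine Subtype.ext (Prod.ext (mul_assoc a b c) (funext fun t => ?_))
    show C.act (a * b) (γ t) * (C.act a (β t) * α t) =
      C.act a (C.act b (γ t) * β t) * α t
    simp only [MulEquiv.map_mul, ← C.act_mul, mul_assoc]
  · rintro ⟨⟨a, α⟩, ha⟩
    refine Subtype.ext (Prod.ext (one_mul a) (funext fun t => ?_))
    show C.act (1 : G₀) (α t) * (1 : G₁) = α t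
    simp
  · rintro ⟨⟨a, α⟩, ha⟩
    refine Subtype.ext (Prod.ext (mul_one a) (funext fun t => ?_))
    show C.act a (1 : G₁) * α t = α t
    simp
  · rintro ⟨⟨a, α⟩, ha⟩
    refine Subtype.ext (Prod.ext (inv_mul_cancel a) (funext fun t => ?_))
    show C.act a⁻¹ (α t) * C.act a⁻¹ (α t)⁻¹ = 1
    rw [← MulEquiv.map_mul, mul_inv_cancel, map_one]
end

section
/- Let ∂: G₁ → G₀ be a group homomorphism equipped with a braided crossed module structure {−,−}: G₀ × G₀ → G₁. Then the rule ˣa := {x, ∂(a)}·a defines a left action of G₀ on G₁ by group automorphisms making ∂: G₁ → G₀ a crossed module of groups, and the induced action of π₀(G) = G₀/Im(∂) on π₁(G) = Ker(∂) is trivial. -/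
/-- A braided crossed module of groups: a homomorphism `d : G₁ → G₀` with a bracket
`{−,−} : G₀ × G₀ → G₁` satisfying the five identities of Conduché. -/
structure BXMod (G₁ G₀ : Type) [Group G₁] [Group G₀] where
  d : G₁ →* G₀
  br : G₀ → G₀ → G₁
  br_d : ∀ x y : G₀, d (br x y) = x * y * x⁻¹ * y⁻¹
  br_dd : ∀ a b : G₁, br (d a) (d b) = a * b * a⁻¹ * b⁻¹
  br_d_inv : ∀ (a : G₁) (x : G₀), br (d a) x = (br x (d a))⁻¹
  br_mul_right : ∀ x y z : G₀,
    br x (y * z) = br x y * br x z * br (z * x * z⁻¹ * x⁻¹) y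
  br_mul_left : ∀ x y z : G₀, br (x * y) z = br x (y * z * y⁻¹) * br y z

variable {G₁ G₀ : Type} [Group G₁] [Group G₀]

namespace BXMod

lemma br_one_left (B : BXMod G₁ G₀) (z : G₀) : B.br 1 z = 1 := by
  have h := B.br_mul_left 1 1 z
  simp only [one_mul, mul_one, inv_one] at h
  exact (mul_left_cancel ((mul_one (B.br 1 z)).trans h)).symm

lemma br_one_right (B : BXMod G₁ G₀) (x : G₀) : B.br x 1 = 1 := by
  have h := B.br_mul_right x 1 1
  simp only [one_mul, mul_one, inv_one, mul_inv_cancel, B.br_one_left] at h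
  exact (mul_left_cancel ((mul_one (B.br x 1)).trans h)).symm

/-- The action of `G₀` on `G₁`. -/
def act (B : BXMod G₁ G₀) (x : G₀) (a : G₁) : G₁ := B.br x (B.d a) * a

lemma d_act (B : BXMod G₁ G₀) (x : G₀) (a : G₁) :
    B.d (B.act x a) = x * B.d a * x⁻¹ := by
  simp only [act, map_mul, B.br_d]; group

lemma act_one (B : BXMod G₁ G₀) (a : G₁) : B.act 1 a = a := by
  simp only [act, B.br_one_left, one_mul]

lemma act_mul (B : BXMod G₁ G₀) (x y : G₀) (a : G₁) :
    B.act (x * y) a = B.act x (B.act y a) := by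
  have h := B.d_act y a
  simp only [act] at h ⊢
  rw [h, B.br_mul_left, mul_assoc]

lemma act_mul' (B : BXMod G₁ G₀) (x : G₀) (a b : G₁) :
    B.act x (a * b) = B.act x a * B.act x b := by
  have key : B.d ((B.br x (B.d b))⁻¹) = B.d b * x * (B.d b)⁻¹ * x⁻¹ := by
    rw [map_inv, B.br_d]; group
  simp only [act, map_mul]
  rw [B.br_mul_right, ← key, B.br_dd]
  group

/-- The action as a homomorphism to automorphisms. -/
def ρ (B : BXMod G₁ G₀) : G₀ →* MulAut G₁ where
  toFun x :=
    { toFun := B.act x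
      invFun := B.act x⁻¹
      left_inv := fun a => by rw [← B.act_mul, inv_mul_cancel, B.act_one]
      right_inv := fun a => by rw [← B.act_mul, mul_inv_cancel, B.act_one]
      map_mul' := B.act_mul' x }
  map_one' := by
    ext a
    exact B.act_one a
  map_mul' x y := by
    ext a
    exact B.act_mul x y a

end BXMod

/-- For a braided crossed module, `ˣa := {x, ∂a}·a` is a left action of `G₀` on `G₁`
by group automorphisms making `∂` a crossed module, and the induced action of
`π₀(G)` on `π₁(G)` is trivial. -/
theorem bxmod_to_xmod (B : BXMod G₁ G₀) :
    ∃ ρ : G₀ →* MulAut G₁,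
      (∀ (x : G₀) (a : G₁), ρ x a = B.br x (B.d a) * a) ∧
      (∀ (x : G₀) (a : G₁), B.d (ρ x a) = x * B.d a * x⁻¹) ∧
      (∀ a b : G₁, ρ (B.d b) a = b * a * b⁻¹) ∧
      (∀ a ∈ B.d.ker, ∀ x : G₀, ρ x a = a) := by
  refine ⟨B.ρ, fun x a => rfl, B.d_act, fun a b => ?_, fun a ha x => ?_⟩
  · show B.act (B.d b) a = b * a * b⁻¹
    simp only [BXMod.act, B.br_dd]
    group
  · show B.act x a = a
    have ha' : B.d a = 1 := ha
    simp only [BXMod.act, ha', B.br_one_right, one_mul]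
end

section
/- Let k be a field of characteristic ≠ 2 and let ∂: L₁ → L₀ be a Lie algebra homomorphism over k equipped with a braided crossed module structure {−,−}: L₀ × L₀ → L₁. Then the rule x·a := {x, ∂(a)} defines an action of L₀ on the Lie algebra L₁ making ∂: L₁ → L₀ a crossed module of Lie algebras; moreover the quotient Lie algebra π₀(L) = L₀/Im(∂) is abelian and the induced action of π₀(L) on π₁(L) = Ker(∂) is trivial. -/
/-- A crossed module of Lie algebras over `k`: a Lie algebra homomorphism
`d : L₁ → L₀` and an action of `L₀` on the Lie algebra `L₁` satisfying
`∂(x·a) = [x, ∂a]` and `∂(a)·b = [a,b]`. -/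
structure LieXMod (k L₁ L₀ : Type) [Field k]
    [LieRing L₁] [LieAlgebra k L₁] [LieRing L₀] [LieAlgebra k L₀] where
  d : L₁ →ₗ⁅k⁆ L₀
  act : L₀ →ₗ[k] L₁ →ₗ[k] L₁
  act_lie : ∀ (x y : L₀) (a : L₁), act ⁅x, y⁆ a = act x (act y a) - act y (act x a)
  act_bracket : ∀ (x : L₀) (a b : L₁), act x ⁅a, b⁆ = ⁅act x a, b⁆ + ⁅a, act x b⁆
  d_act : ∀ (x : L₀) (a : L₁), d (act x a) = ⁅x, d a⁆
  peiffer : ∀ a b : L₁, act (d a) b = ⁅a, b⁆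

/-- A braided crossed module of Lie algebras over `k`. -/
structure LieBXMod (k L₁ L₀ : Type) [Field k]
    [LieRing L₁] [LieAlgebra k L₁] [LieRing L₀] [LieAlgebra k L₀] where
  d : L₁ →ₗ⁅k⁆ L₀
  br : L₀ →ₗ[k] L₀ →ₗ[k] L₁
  br_d : ∀ x y : L₀, d (br x y) = ⁅x, y⁆
  br_dd : ∀ a b : L₁, br (d a) (d b) = ⁅a, b⁆
  br_d_skew : ∀ (a : L₁) (x : L₀), br (d a) x + br x (d a) = 0
  br_jacobi : ∀ x y z : L₀, br x ⁅y, z⁆ + br z ⁅x, y⁆ + br y ⁅z, x⁆ = 0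

variable {k L₁ L₀ : Type} [Field k]
  [LieRing L₁] [LieAlgebra k L₁] [LieRing L₀] [LieAlgebra k L₀]

/-- For a braided crossed module of Lie algebras, `x·a := {x, ∂a}` defines an action
of `L₀` on the Lie algebra `L₁` making `∂` a crossed module of Lie algebras;
moreover `π₀(L) = L₀/Im ∂` is abelian and its induced action on `π₁(L) = Ker ∂` is
trivial. -/
theorem lie_bxmod_to_xmod (h2 : (2 : k) ≠ 0) (B : LieBXMod k L₁ L₀) :
    (∀ (x y : L₀) (a : L₁),
      B.br ⁅x, y⁆ (B.d a) =
        B.br x (B.d (B.br y (B.d a))) - B.br y (B.d (B.br x (B.d a)))) ∧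
    (∀ (x : L₀) (a b : L₁),
      B.br x (B.d ⁅a, b⁆) = ⁅B.br x (B.d a), b⁆ + ⁅a, B.br x (B.d b)⁆) ∧
    (∀ (x : L₀) (a : L₁), B.d (B.br x (B.d a)) = ⁅x, B.d a⁆) ∧
    (∀ a b : L₁, B.br (B.d a) (B.d b) = ⁅a, b⁆) ∧
    (∀ x y : L₀, ∃ a : L₁, ⁅x, y⁆ = B.d a) ∧
    (∀ a : L₁, B.d a = 0 → ∀ x : L₀, B.br x (B.d a) = 0) := by

  refine ⟨?_, ?_, fun x a => B.br_d x (B.d a), B.br_dd, ?_, ?_⟩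
  · intro x y a
    have hj := B.br_jacobi x y (B.d a)
    have hs := B.br_d_skew a ⁅x, y⁆
    have h1 : B.br y ⁅B.d a, x⁆ = - B.br y ⁅x, B.d a⁆ := by
      rw [← lie_skew, map_neg]
    rw [B.br_d, B.br_d]
    linear_combination (norm := module) hs - hj + h1
  · intro x a b
    have hj := B.br_jacobi x (B.d a) (B.d b)
    have h1 : B.br (B.d b) ⁅x, B.d a⁆ = ⁅b, B.br x (B.d a)⁆ := by
      rw [← B.br_d x (B.d a), B.br_dd]
    have h2 : B.br (B.d a) ⁅B.d b, x⁆ = - ⁅a, B.br x (B.d b)⁆ := by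
      rw [← lie_skew, ← B.br_d x (B.d b), map_neg, B.br_dd]
    have h3 : ⁅B.br x (B.d a), b⁆ = - ⁅b, B.br x (B.d a)⁆ := (lie_skew _ _).symm
    rw [LieHom.map_lie]
    linear_combination (norm := module) hj - h1 - h2 - h3
  · intro x y
    exact ⟨B.br x y, (B.br_d x y).symm⟩
  · intro a ha x
    rw [ha, map_zero]
end
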